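/- arXiv:0812.1249 — 2 statements merged into one kernel-verified Lean document; each statement's English description precedes it below -/
import Mathlib

section
/- Define f(v) := 1 + Σ_T ((t+1)/t)^{κ(v^T)} t^{|T|+1} summed over subsets T of positions of v. For the alternating word z_{n-1} = xyxy... of length n-1 and any non-alternating word v of length n-1, every coefficient of f(z_{n-1}) is strictly greater than the corresponding coefficient of f(v) in degrees 0 through n-1. -/
/-- `κ(w) = 2 + #{i : w_i ≠ w_{i+1}}` for nonempty `w`, and `κ(empty) = 1`. -/
def kappa (w : List Bool) : ℕ :=
  if w = [] then 1 else 2 + (w.zip w.tail).countP (fun p => p.1 != p.2)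

/-- The subword of `v` at the (1-indexed) positions in `T`. -/
def subword (v : List Bool) (T : Finset ℕ) : List Bool :=
  (v.zipIdx.filter (fun p => decide (p.2 + 1 ∈ T))).map Prod.fst

/-- The `f`-polynomial `F_v(t) = 1 + ∑_{T ⊆ [|v|]} ((t+1)/t)^{κ(v^T)} t^{|T|+1}`,
written with the power of `t` as `t^{|T|+1-κ(v^T)}` (valid since `κ(v^T) ≤ |T|+1`). -/
noncomputable def fPoly (v : List Bool) : Polynomial ℤ :=
  1 + ∑ T ∈ (Finset.Icc 1 v.length).powerset,
      (Polynomial.X + 1) ^ kappa (subword v T) *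
        Polynomial.X ^ (T.card + 1 - kappa (subword v T))

/-- The alternating word of length `m` starting with `x` (where `x = false`, `y = true`). -/
def zWord (m : ℕ) : List Bool := (List.range m).map (fun i => decide (i % 2 = 1))

/-!
Write `S_j(v)` for the part of `f(v) - 1` summed over `T ⊆ {1, …, j}`, and `N_j(v, e)` for the
part of `S_j(v)` over those `T` whose subword does not end in the letter `e`. Appending the letter
`v[j]` to a subword multiplies its summand by `t + 1` if it starts a new run and by `t` otherwise,
whence `S_{j+1} = (t + 1) S_j + N_j(v, v[j])`, while `N_{j+1}(v, v[j+1])` is `(t + 1)(S_j + 1)`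
if `v[j+1] ≠ v[j]` and only `N_j(v, v[j]) ≤ S_j` if `v[j+1] = v[j]`. Hence, coefficientwise, the
alternating word dominates at every step, and a repeated letter `v[p] = v[p+1]` opens a gap of at
least `t (t + 1)^(p+1) + t + 1`, which the factor `t + 1` spreads over all degrees up to `|v|`.
-/

open Finset Polynomial

lemma subword_empty (v : List Bool) : subword v ∅ = [] := by
  simp [subword]

lemma subword_insert_succ {v : List Bool} {j : ℕ} (hj : j < v.length) {T : Finset ℕ}
    (hT : T ⊆ Icc 1 j) : subword v (insert (j + 1) T) = subword v T ++ [v[j]] := by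
  obtain ⟨u, w, hv, rfl⟩ : ∃ u w, v = u ++ v[j] :: w ∧ u.length = j :=
    ⟨v.take j, v.drop (j + 1), by rw [← List.drop_eq_getElem_cons hj, List.take_append_drop],
      by simp [hj.le]⟩
  generalize v[u.length] = a at hv
  subst hv
  have hTu : u.length + 1 ∉ T := fun h => by have := mem_Icc.mp (hT h); omega
  have hhead : u.zipIdx.filter (fun p => p.2 + 1 ∈ insert (u.length + 1) T) =
      u.zipIdx.filter (fun p => p.2 + 1 ∈ T) := List.filter_congr fun p hp => by
    have := List.snd_lt_of_mem_zipIdx hp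
    simp only [mem_insert, Nat.add_right_cancel_iff]; grind
  have htail : ∀ S ⊆ insert (u.length + 1) T,
      (w.zipIdx (u.length + 1)).filter (fun p => p.2 + 1 ∈ S) = [] := fun S hS => by
    refine List.filter_eq_nil_iff.mpr fun p hp hpS => ?_
    have := List.le_snd_of_mem_zipIdx hp
    rcases mem_insert.mp (hS (of_decide_eq_true hpS)) with h | h
    · omega
    · have := mem_Icc.mp (hT h); omega
  rw [subword, subword, List.zipIdx_append, Nat.zero_add, List.zipIdx_cons, List.filter_append,
    List.filter_append, List.filter_cons, List.filter_cons, hhead, htail _ subset_rfl,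
    htail T (subset_insert _ _)]
  simp [hTu]

lemma length_subword {v : List Bool} {T : Finset ℕ} (hT : T ⊆ Icc 1 v.length) :
    (subword v T).length = #T := by
  induction T using Finset.induction_on_max with
  | empty => simp [subword_empty]
  | insert a T hlt ih =>
    have ha := mem_Icc.mp (hT (mem_insert_self a T))
    obtain ⟨j, rfl⟩ : ∃ j, a = j + 1 := ⟨a - 1, by omega⟩
    have hTj : T ⊆ Icc 1 j := fun x hx => by
      have := mem_Icc.mp (hT (mem_insert_of_mem hx)); have := hlt x hx
      exact mem_Icc.mpr (by omega)
    have hj : j < v.length := by omega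
    rw [subword_insert_succ hj hTj, List.length_append,
      ih (hTj.trans (Icc_subset_Icc_right hj.le)),
      card_insert_of_notMem (fun h => (hlt _ h).false), List.length_singleton]

lemma kappa_le_length_add_one (w : List Bool) : kappa w ≤ w.length + 1 := by
  unfold kappa
  split
  · omega
  · have := (w.zip w.tail).countP_le_length (p := fun p => p.1 != p.2)
    have : w.length ≠ 0 := by simpa
    simp only [List.length_zip, List.length_tail] at *
    omega

lemma kappa_cons_cons (a b : Bool) (w : List Bool) :
    kappa (a :: b :: w) = (if a = b then 0 else 1) + kappa (b :: w) := by
  simp only [kappa, List.zip_cons_cons, List.tail_cons, List.countP_cons, reduceCtorEq, if_false]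
  cases a <;> cases b <;> simp <;> omega

lemma kappa_append_singleton (w : List Bool) (a : Bool) :
    kappa (w ++ [a]) = kappa w + if w.getLast? = some a then 0 else 1 := by
  induction w with
  | nil => simp [kappa]
  | cons b w ih =>
    cases w with
    | nil => cases a <;> cases b <;> simp [kappa]
    | cons c w =>
      rw [List.cons_append, List.cons_append, kappa_cons_cons, ← List.cons_append, ih,
        kappa_cons_cons, List.getLast?_cons_cons]
      omega

/-- Coefficientwise comparisons `p ≤ q` are expressed as `q - p ∈ nonnegCoeffs`. -/
def nonnegCoeffs : Subsemiring ℤ[X] where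
  carrier := {p | ∀ i, 0 ≤ p.coeff i}
  mul_mem' {p q} hp hq i := by
    rw [coeff_mul]
    exact sum_nonneg fun x _ => mul_nonneg (hp x.1) (hq x.2)
  one_mem' i := by rw [coeff_one]; split_ifs <;> simp
  add_mem' {p q} hp hq i := by rw [coeff_add]; exact add_nonneg (hp i) (hq i)
  zero_mem' i := by simp

lemma mem_nonnegCoeffs {p : ℤ[X]} : p ∈ nonnegCoeffs ↔ ∀ i, 0 ≤ p.coeff i := Iff.rfl

lemma X_mem_nonnegCoeffs : (X : ℤ[X]) ∈ nonnegCoeffs := fun i => by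
  rw [coeff_X]; split_ifs <;> simp

lemma X_add_one_mem_nonnegCoeffs : (X + 1 : ℤ[X]) ∈ nonnegCoeffs :=
  add_mem X_mem_nonnegCoeffs (one_mem _)

lemma coeff_X_mul_X_add_one_pow_add_X_add_one_pow_pos {n i : ℕ} (hi : i ≤ n + 1) (r : ℕ) :
    0 < (X * (X + 1) ^ n + (X + 1) ^ r : ℤ[X]).coeff i := by
  rw [coeff_add]
  rcases i with _ | i
  · simp [coeff_X_add_one_pow]
  · rw [coeff_X_mul, coeff_X_add_one_pow, coeff_X_add_one_pow]
    have := Nat.choose_pos (show i ≤ n by omega)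
    positivity

noncomputable def fTerm (v : List Bool) (T : Finset ℕ) : ℤ[X] :=
  (X + 1) ^ kappa (subword v T) * X ^ (#T + 1 - kappa (subword v T))

noncomputable def prefixSum (v : List Bool) (j : ℕ) : ℤ[X] :=
  ∑ T ∈ (Icc 1 j).powerset, fTerm v T

noncomputable def prefixSumNotEndingIn (v : List Bool) (j : ℕ) (e : Bool) : ℤ[X] :=
  ∑ T ∈ (Icc 1 j).powerset with (subword v T).getLast? ≠ some e, fTerm v T

lemma fPoly_eq_one_add_prefixSum (v : List Bool) : fPoly v = 1 + prefixSum v v.length := rfl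

lemma fTerm_empty (v : List Bool) : fTerm v ∅ = X + 1 := by
  simp [fTerm, subword_empty, kappa]

lemma fTerm_mem_nonnegCoeffs (v : List Bool) (T : Finset ℕ) : fTerm v T ∈ nonnegCoeffs :=
  mul_mem (pow_mem X_add_one_mem_nonnegCoeffs _) (pow_mem X_mem_nonnegCoeffs _)

lemma fTerm_insert_succ {v : List Bool} {j : ℕ} (hj : j < v.length) {T : Finset ℕ}
    (hT : T ⊆ Icc 1 j) :
    fTerm v (insert (j + 1) T) =
      X * fTerm v T + if (subword v T).getLast? ≠ some v[j] then fTerm v T else 0 := by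
  have hcard : #(insert (j + 1) T) = #T + 1 :=
    card_insert_of_notMem fun h => by have := mem_Icc.mp (hT h); omega
  have hκ : kappa (subword v T) ≤ #T + 1 := by
    have := kappa_le_length_add_one (subword v T)
    rwa [length_subword (hT.trans (Icc_subset_Icc_right hj.le))] at this
  rw [fTerm, fTerm, hcard, subword_insert_succ hj hT, kappa_append_singleton]
  split_ifs with h h'
  · exact absurd h h'
  · rw [add_zero, show #T + 1 + 1 - kappa (subword v T) = #T + 1 - kappa (subword v T) + 1 by
      omega, pow_succ]
    ring
  · rw [show #T + 1 + 1 - (kappa (subword v T) + 1) = #T + 1 - kappa (subword v T) by omega,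
      pow_succ]
    ring

lemma sum_powerset_Icc_succ {M : Type*} [AddCommMonoid M] (j : ℕ) (F : Finset ℕ → M) :
    ∑ T ∈ (Icc 1 (j + 1)).powerset, F T =
      ∑ T ∈ (Icc 1 j).powerset, F T + ∑ T ∈ (Icc 1 j).powerset, F (insert (j + 1) T) := by
  rw [← insert_Icc_right_eq_Icc_add_one (Nat.le_add_left 1 j), sum_powerset_insert (by simp)]

lemma prefixSum_zero (v : List Bool) : prefixSum v 0 = X + 1 := by
  simp [prefixSum, fTerm_empty]

lemma prefixSumNotEndingIn_zero (v : List Bool) (e : Bool) :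
    prefixSumNotEndingIn v 0 e = X + 1 := by
  simp [prefixSumNotEndingIn, filter_singleton, subword_empty, fTerm_empty]

lemma prefixSum_succ {v : List Bool} {j : ℕ} (hj : j < v.length) :
    prefixSum v (j + 1) = (X + 1) * prefixSum v j + prefixSumNotEndingIn v j v[j] := by
  rw [prefixSum, sum_powerset_Icc_succ, sum_congr rfl fun T hT => fTerm_insert_succ hj
    (mem_powerset.mp hT), sum_add_distrib, ← mul_sum, ← sum_filter, ← prefixSum,
    ← prefixSumNotEndingIn]
  ring

lemma prefixSumNotEndingIn_succ_self {v : List Bool} {j : ℕ} (hj : j < v.length) :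
    prefixSumNotEndingIn v (j + 1) v[j] = prefixSumNotEndingIn v j v[j] := by
  rw [prefixSumNotEndingIn, sum_filter, sum_powerset_Icc_succ, ← sum_filter,
    ← prefixSumNotEndingIn, add_eq_left]
  refine sum_eq_zero fun T hT => ?_
  simp [subword_insert_succ hj (mem_powerset.mp hT)]

/-- The empty subword ends in neither letter, every other one in exactly one. -/
lemma prefixSumNotEndingIn_add_not {v : List Bool} {j : ℕ} (hj : j ≤ v.length) (e : Bool) :
    prefixSumNotEndingIn v j e + prefixSumNotEndingIn v j (!e) = prefixSum v j + (X + 1) := by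
  have hsplit : ∀ (o : Option Bool) (t : ℤ[X]),
      ((if o ≠ some e then t else 0) + if o ≠ some (!e) then t else 0) =
        t + if o = none then t else 0 := by
    intro o t
    rcases o with _ | _ | _ <;> cases e <;> simp
  have hempty : ∑ T ∈ (Icc 1 j).powerset, (if T = ∅ then fTerm v T else 0) = X + 1 := by
    rw [sum_ite_eq', if_pos (empty_mem_powerset _), fTerm_empty]
  rw [prefixSumNotEndingIn, prefixSumNotEndingIn, sum_filter, sum_filter, ← sum_add_distrib,
    sum_congr rfl fun T _ => hsplit _ _, sum_add_distrib, ← prefixSum, ← hempty]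
  congr 1
  refine sum_congr rfl fun T hT => ?_
  have hlen := length_subword ((mem_powerset.mp hT).trans (Icc_subset_Icc_right hj))
  simp only [List.getLast?_eq_none_iff, ← List.length_eq_zero_iff, hlen, card_eq_zero]

lemma prefixSumNotEndingIn_succ_of_ne {v : List Bool} {j : ℕ} (hj : j < v.length) {e : Bool}
    (he : v[j] ≠ e) :
    prefixSumNotEndingIn v (j + 1) e = (X + 1) * (prefixSum v j + 1) := by
  have hnew : ∑ T ∈ (Icc 1 j).powerset with (subword v (insert (j + 1) T)).getLast? ≠ some e,
      fTerm v (insert (j + 1) T) = X * prefixSum v j + prefixSumNotEndingIn v j v[j] := by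
    rw [filter_true_of_mem fun T hT => by simp [subword_insert_succ hj (mem_powerset.mp hT), he]]
    rw [sum_congr rfl fun T hT => fTerm_insert_succ hj (mem_powerset.mp hT), sum_add_distrib,
      ← mul_sum, ← sum_filter, ← prefixSum, ← prefixSumNotEndingIn]
  have hold := prefixSumNotEndingIn_add_not hj.le e
  rw [show (!e) = v[j] by cases e <;> simpa using he] at hold
  rw [prefixSumNotEndingIn, sum_filter, sum_powerset_Icc_succ, ← sum_filter, ← sum_filter, hnew,
    ← prefixSumNotEndingIn]
  linear_combination hold

lemma prefixSum_sub_prefixSumNotEndingIn_mem (v : List Bool) (j : ℕ) (e : Bool) :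
    prefixSum v j - prefixSumNotEndingIn v j e ∈ nonnegCoeffs := by
  rw [prefixSum, prefixSumNotEndingIn, ← sum_filter_add_sum_filter_not _
    (fun T => (subword v T).getLast? ≠ some e), add_sub_cancel_left]
  exact sum_mem fun T _ => fTerm_mem_nonnegCoeffs v T

lemma prefixSum_sub_X_add_one_pow_mem {v : List Bool} {j : ℕ} (hj : j ≤ v.length) :
    prefixSum v j - (X + 1) ^ (j + 1) ∈ nonnegCoeffs := by
  induction j with
  | zero => simp [prefixSum_zero]
  | succ j ih =>
    convert add_mem (mul_mem X_add_one_mem_nonnegCoeffs (ih (by omega)))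
      (sum_mem fun T _ => fTerm_mem_nonnegCoeffs v T) using 1
    rw [prefixSum_succ (by omega), prefixSumNotEndingIn]
    ring

lemma sub_prefixSumNotEndingIn_succ_sub_mem_of_eq {v : List Bool} {j : ℕ} (hj : j + 1 < v.length)
    (heq : v[j] = v[j + 1]) :
    (X + 1) * (prefixSum v j + 1) - prefixSumNotEndingIn v (j + 1) v[j + 1] -
      (X * (X + 1) ^ (j + 1) + X + 1) ∈ nonnegCoeffs := by
  convert add_mem
    (mul_mem X_mem_nonnegCoeffs (prefixSum_sub_X_add_one_pow_mem (by omega : j ≤ v.length)))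
    (prefixSum_sub_prefixSumNotEndingIn_mem v j v[j]) using 1
  rw [← heq, prefixSumNotEndingIn_succ_self (by omega)]
  ring

lemma sub_prefixSumNotEndingIn_succ_mem {v : List Bool} {j : ℕ} (hj : j + 1 < v.length) :
    (X + 1) * (prefixSum v j + 1) - prefixSumNotEndingIn v (j + 1) v[j + 1] ∈ nonnegCoeffs := by
  by_cases heq : v[j] = v[j + 1]
  · have hg : X * (X + 1) ^ (j + 1) + X + 1 ∈ nonnegCoeffs :=
      add_mem (add_mem (mul_mem X_mem_nonnegCoeffs (pow_mem X_add_one_mem_nonnegCoeffs _))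
        X_mem_nonnegCoeffs) (one_mem _)
    simpa using add_mem (sub_prefixSumNotEndingIn_succ_sub_mem_of_eq hj heq) hg
  · rw [prefixSumNotEndingIn_succ_of_ne (by omega) heq, sub_self]
    exact zero_mem _

lemma prefixSum_sub_mem_of_isChain {v w : List Bool} (hlen : w.length = v.length)
    (hw : w.IsChain (· ≠ ·)) {j : ℕ} (hj : j ≤ v.length) :
    prefixSum w j - prefixSum v j ∈ nonnegCoeffs ∧ ∀ hlt : j < v.length,
      prefixSumNotEndingIn w j w[j] - prefixSumNotEndingIn v j v[j] ∈ nonnegCoeffs := by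
  induction j with
  | zero => simp [prefixSum_zero, prefixSumNotEndingIn_zero]
  | succ j ih =>
    obtain ⟨hS, hN⟩ := ih (by omega)
    refine ⟨?_, fun hlt => ?_⟩
    · convert add_mem (mul_mem X_add_one_mem_nonnegCoeffs hS) (hN (by omega)) using 1
      rw [prefixSum_succ (by omega), prefixSum_succ (by omega)]
      ring
    · convert add_mem (mul_mem X_add_one_mem_nonnegCoeffs hS)
        (sub_prefixSumNotEndingIn_succ_mem hlt) using 1
      rw [prefixSumNotEndingIn_succ_of_ne (by omega) (hw.getElem j (by omega))]
      ring

lemma prefixSumNotEndingIn_sub_sub_mem_of_isChain {v w : List Bool} (hlen : w.length = v.length)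
    (hw : w.IsChain (· ≠ ·)) {p : ℕ} (hp : p + 1 < v.length) (heq : v[p] = v[p + 1]) :
    prefixSumNotEndingIn w (p + 1) w[p + 1] - prefixSumNotEndingIn v (p + 1) v[p + 1] -
      (X * (X + 1) ^ (p + 1) + X + 1) ∈ nonnegCoeffs := by
  convert add_mem (mul_mem X_add_one_mem_nonnegCoeffs
    (prefixSum_sub_mem_of_isChain hlen hw (j := p) (by omega)).1)
    (sub_prefixSumNotEndingIn_succ_sub_mem_of_eq hp heq) using 1
  rw [prefixSumNotEndingIn_succ_of_ne (by omega) (hw.getElem p (by omega))]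
  ring

lemma prefixSum_sub_sub_mem_of_isChain {v w : List Bool} (hlen : w.length = v.length)
    (hw : w.IsChain (· ≠ ·)) {p : ℕ} (hp : p + 1 < v.length) (heq : v[p] = v[p + 1]) (c : ℕ)
    (hc : p + 2 + c ≤ v.length) :
    prefixSum w (p + 2 + c) - prefixSum v (p + 2 + c) -
      (X * (X + 1) ^ (p + 1 + c) + (X + 1) ^ (c + 1)) ∈ nonnegCoeffs := by
  induction c with
  | zero =>
    convert add_mem (mul_mem X_add_one_mem_nonnegCoeffs
      (prefixSum_sub_mem_of_isChain hlen hw hp.le).1)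
      (prefixSumNotEndingIn_sub_sub_mem_of_isChain hlen hw hp heq) using 1
    rw [prefixSum_succ hp, prefixSum_succ (by omega)]
    ring
  | succ c ih =>
    convert add_mem (mul_mem X_add_one_mem_nonnegCoeffs (ih (by omega)))
      ((prefixSum_sub_mem_of_isChain hlen hw (j := p + 2 + c) (by omega)).2 (by omega)) using 1
    rw [← add_assoc, prefixSum_succ (by omega), prefixSum_succ (by omega)]
    ring

theorem coeff_fPoly_lt_of_isChain {v w : List Bool} (hlen : w.length = v.length)
    (hw : w.IsChain (· ≠ ·)) (hv : ¬ v.IsChain (· ≠ ·)) :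
    ∀ i ≤ v.length, (fPoly v).coeff i < (fPoly w).coeff i := by
  intro i hi
  obtain ⟨p, hp, heq⟩ : ∃ p, ∃ hp : p + 1 < v.length, v[p] = v[p + 1] := by
    simpa [List.isChain_iff_getElem] using hv
  obtain ⟨c, hc⟩ : ∃ c, v.length = p + 2 + c := ⟨v.length - (p + 2), by omega⟩
  have hgap := mem_nonnegCoeffs.mp (prefixSum_sub_sub_mem_of_isChain hlen hw hp heq c hc.ge) i
  have hpos := coeff_X_mul_X_add_one_pow_add_X_add_one_pow_pos (n := p + 1 + c)
    (i := i) (by omega) (c + 1)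
  rw [fPoly_eq_one_add_prefixSum, fPoly_eq_one_add_prefixSum, hlen, hc]
  simp only [coeff_sub, coeff_add] at hgap hpos ⊢
  linarith

lemma zWord_isChain (m : ℕ) : (zWord m).IsChain (· ≠ ·) := by
  simp only [List.isChain_iff_getElem, zWord, List.getElem_map, List.getElem_range]
  intro i _
  simp only [ne_eq, decide_eq_decide]
  omega

theorem stmt10_general (n : ℕ) (v : List Bool) (hv : v.length = n - 1)
    (hna : ¬ List.Chain' (· ≠ ·) v) :
    ∀ i ≤ n - 1, (fPoly v).coeff i < (fPoly (zWord (n - 1))).coeff i := by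
  rw [← hv]
  exact coeff_fPoly_lt_of_isChain (by simp [zWord]) (zWord_isChain _) hna

/-- the `f`-polynomial of the alternating word strictly dominates,
coefficientwise in degrees `0,…,n-1`, that of any non-alternating word of length `n-1`. -/
theorem stmt10 (n : ℕ) (hn : 1 ≤ n) (v : List Bool) (hv : v.length = n - 1)
    (hna : ¬ List.Chain' (· ≠ ·) v) :
    ∀ i ≤ n - 1, (fPoly v).coeff i < (fPoly (zWord (n - 1))).coeff i :=
  stmt10_general n v hv hna
end

section
/- For any word v over {x,y}, the number of subsets T of the positions of v such that the subword v^T is alternating (including T = ∅) equals the number of factorizations v = u_1 ··· u_k (k ≥ 1) in which each of u_1,...,u_{k-1} is of the form x^i y or y^i x with i ≥ 0 and u_k is arbitrary (possibly empty). -/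
/-- A word of the form `x^i y` or `y^i x` (with `x = false`, `y = true`). -/
def GoodFactor (w : List Bool) : Prop :=
  (∃ i, w = List.replicate i false ++ [true]) ∨
  (∃ i, w = List.replicate i true ++ [false])

open Finset

theorem Finset.powerset_map {α β : Type*} (f : α ↪ β) (s : Finset α) :
    (s.map f).powerset = s.powerset.map (mapEmbedding f).toEmbedding := by
  ext t
  simp [subset_map_iff, eq_comm]

lemma Icc_one_add_one_eq_insert_map (n : ℕ) :
    Icc 1 (n + 1) = insert 1 ((Icc 1 n).map (addRightEmbedding 1)) := by
  rw [map_add_right_Icc, insert_Icc_add_one_left_eq_Icc (by omega)]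

section subword

variable (c : Bool) (w : List Bool)

lemma subword_cons {S T : Finset ℕ} (hST : ∀ n, n + 1 ∈ S ↔ n + 2 ∈ T) :
    subword (c :: w) T = if 1 ∈ T then c :: subword w S else subword w S := by
  have hS : subword w S = (w.zipIdx.filter (fun p => p.2 + 2 ∈ T)).map Prod.fst := by
    simp only [subword, hST]
  rw [hS]
  simp only [subword, List.zipIdx_cons, List.zipIdx_succ, List.filter_cons, List.filter_map]
  split_ifs <;> simp_all [Function.comp_def]

lemma subword_cons_map_add_one {T : Finset ℕ} (hT : 0 ∉ T) :
    subword (c :: w) (T.map (addRightEmbedding 1)) = subword w T := by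
  rw [subword_cons c w (S := T) fun n => (mem_map' (addRightEmbedding 1)).symm]
  simp [hT]

lemma subword_cons_insert_one_map_add_one (T : Finset ℕ) :
    subword (c :: w) (insert 1 (T.map (addRightEmbedding 1))) = c :: subword w T := by
  rw [subword_cons c w (S := T) fun n => by simp]
  simp

end subword

def subwordCount (P : List Bool → Prop) [DecidablePred P] (v : List Bool) : ℕ :=
  #{T ∈ (Icc 1 v.length).powerset | P (subword v T)}

section subwordCount

variable (P : List Bool → Prop) [DecidablePred P]

lemma subwordCount_nil : subwordCount P [] = if P [] then 1 else 0 := by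
  simp [subwordCount, subword, apply_ite]

lemma subwordCount_cons (c : Bool) (w : List Bool) :
    subwordCount P (c :: w) = subwordCount P w + subwordCount (fun l => P (c :: l)) w := by
  have h1 : 1 ∉ (Icc 1 w.length).map (addRightEmbedding 1) := by simp
  simp only [subwordCount, card_filter, List.length_cons, Icc_one_add_one_eq_insert_map,
    sum_powerset_insert h1, powerset_map, sum_map]
  congr 1 <;> refine sum_congr rfl fun T hT => ?_
  · have h0 : 0 ∉ T := fun h => by simpa using mem_powerset.1 hT h
    simp [subword_cons_map_add_one c w h0]
  · simp [subword_cons_insert_one_map_add_one]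

lemma subwordCount_congr {Q : List Bool → Prop} [DecidablePred Q] (h : ∀ l, P l ↔ Q l)
    (v : List Bool) : subwordCount P v = subwordCount Q v := by
  simp only [subwordCount, h]

lemma subwordCount_eq_zero (h : ∀ l, ¬ P l) (v : List Bool) : subwordCount P v = 0 := by
  simp [subwordCount, h]

end subwordCount

def alternatingCount (v : List Bool) : ℕ := subwordCount (List.IsChain (· ≠ ·)) v

def alternatingCountAfter (c : Bool) (v : List Bool) : ℕ :=
  subwordCount (fun l => List.IsChain (· ≠ ·) (c :: l)) v

lemma alternatingCount_nil : alternatingCount [] = 1 := by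
  simp [alternatingCount, subwordCount_nil]

lemma alternatingCountAfter_nil (c : Bool) : alternatingCountAfter c [] = 1 := by
  simp [alternatingCountAfter, subwordCount_nil]

lemma alternatingCount_cons (c : Bool) (w : List Bool) :
    alternatingCount (c :: w) = alternatingCount w + alternatingCountAfter c w :=
  subwordCount_cons _ c w

lemma alternatingCountAfter_cons_self (c : Bool) (w : List Bool) :
    alternatingCountAfter c (c :: w) = alternatingCountAfter c w := by
  rw [alternatingCountAfter, subwordCount_cons,
    subwordCount_eq_zero (fun l => List.IsChain (· ≠ ·) (c :: c :: l)) (by simp), add_zero]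
  rfl

lemma alternatingCountAfter_cons_of_ne {c d : Bool} (h : d ≠ c) (w : List Bool) :
    alternatingCountAfter c (d :: w) = alternatingCountAfter c w + alternatingCountAfter d w := by
  rw [alternatingCountAfter, subwordCount_cons,
    subwordCount_congr (fun l => List.IsChain (· ≠ ·) (c :: d :: l))
      (Q := fun l => List.IsChain (· ≠ ·) (d :: l)) (by simp [Ne.symm h])]
  rfl

lemma alternatingCountAfter_add_alternatingCountAfter_not (c : Bool) (w : List Bool) :
    alternatingCountAfter c w + alternatingCountAfter (!c) w = 1 + alternatingCount w := by
  induction w generalizing c with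
  | nil => simp [alternatingCountAfter_nil, alternatingCount_nil]
  | cons d w ih =>
    have key : alternatingCountAfter d (d :: w) + alternatingCountAfter (!d) (d :: w) =
        1 + alternatingCount (d :: w) := by
      rw [alternatingCountAfter_cons_self, alternatingCountAfter_cons_of_ne (by simp),
        alternatingCount_cons]
      linarith [ih d]
    obtain rfl | rfl := Bool.eq_or_eq_not c d
    · exact key
    · rwa [Bool.not_not, add_comm]

lemma alternatingCountAfter_cons_not (c : Bool) (w : List Bool) :
    alternatingCountAfter c ((!c) :: w) = 1 + alternatingCount w := by
  rw [alternatingCountAfter_cons_of_ne (by simp),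
    alternatingCountAfter_add_alternatingCountAfter_not]

def GoodFactorOf (c : Bool) (u : List Bool) : Prop := ∃ i, u = List.replicate i c ++ [!c]

lemma goodFactor_iff {u : List Bool} :
    GoodFactor u ↔ GoodFactorOf false u ∨ GoodFactorOf true u :=
  Iff.rfl

lemma GoodFactorOf.ne_nil {c : Bool} {u : List Bool} (h : GoodFactorOf c u) : u ≠ [] := by
  obtain ⟨i, rfl⟩ := h
  simp

lemma not_goodFactorOf_nil (c : Bool) : ¬ GoodFactorOf c [] := fun h => h.ne_nil rfl

lemma goodFactorOf_cons_iff {c d : Bool} {u : List Bool} :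
    GoodFactorOf c (d :: u) ↔ (d = !c ∧ u = []) ∨ (d = c ∧ GoodFactorOf c u) := by
  constructor
  · rintro ⟨_ | i, h⟩
    · simp_all
    · simp only [List.replicate_succ, List.cons_append, List.cons.injEq] at h
      exact .inr ⟨h.1, i, h.2⟩
  · rintro (⟨rfl, rfl⟩ | ⟨rfl, i, rfl⟩)
    · exact ⟨0, rfl⟩
    · exact ⟨i + 1, rfl⟩

lemma goodFactor_cons_iff {d : Bool} {u : List Bool} :
    GoodFactor (d :: u) ↔ u = [] ∨ GoodFactorOf d u := by
  cases d <;> simp [goodFactor_iff, goodFactorOf_cons_iff, or_comm]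

lemma not_goodFactor_nil : ¬ GoodFactor [] := by
  simp [goodFactor_iff, not_goodFactorOf_nil]

abbrev Factorization (v : List Bool) : Type :=
  {L : List (List Bool) // L ≠ [] ∧ L.flatten = v ∧ ∀ w ∈ L.dropLast, GoodFactor w}

/-- A factorization `u :: L` of `v` into at least two factors, split off its first factor `u`,
which is required to satisfy `Q` instead of `GoodFactor`. -/
abbrev HeadFactorization (Q : List Bool → Prop) (v : List Bool) : Type :=
  {p : List Bool × List (List Bool) //
    Q p.1 ∧ p.2 ≠ [] ∧ p.1 ++ p.2.flatten = v ∧ ∀ w ∈ p.2.dropLast, GoodFactor w}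

lemma card_factorization (v : List Bool) :
    ENat.card (Factorization v) = 1 + ENat.card (HeadFactorization GoodFactor v) := by
  let f : Unit ⊕ HeadFactorization GoodFactor v → Factorization v :=
    Sum.elim (fun _ => ⟨[v], by simp⟩) fun p =>
      ⟨p.1.1 :: p.1.2, by simp, by simp [p.2.2.2.1], by
        simpa [List.dropLast_cons_of_ne_nil p.2.2.1] using ⟨p.2.1, p.2.2.2.2⟩⟩
  have hf : f.Bijective := by
    constructor
    · rintro (⟨⟩ | ⟨⟨u, L⟩, hp⟩) (⟨⟩ | ⟨⟨u', L'⟩, hp'⟩) h <;>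
        simp only [f, Sum.elim_inl, Sum.elim_inr, Subtype.mk.injEq, List.cons.injEq] at h
      · rfl
      · exact absurd h.2.symm hp'.2.1
      · exact absurd h.2 hp.2.1
      · simp [h.1, h.2]
    · rintro ⟨_ | ⟨u, _ | ⟨u', L⟩⟩, hne, hv, hgood⟩
      · exact absurd rfl hne
      · exact ⟨.inl (), by simp [f, ← hv]⟩
      · simp only [List.dropLast_cons_cons, List.mem_cons, forall_eq_or_imp] at hgood
        exact ⟨.inr ⟨(u, u' :: L), hgood.1, by simp, hv, hgood.2⟩, rfl⟩
  rw [← ENat.card_congr (Equiv.ofBijective f hf), ENat.card_sum]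
  simp

lemma card_headFactorization_eq_zero {Q : List Bool → Prop} {v : List Bool}
    (hQ : ∀ u, u <+: v → ¬ Q u) : ENat.card (HeadFactorization Q v) = 0 :=
  (ENat.card_eq_zero_iff_empty _).2 ⟨fun p => hQ p.1.1 ⟨_, p.2.2.2.1⟩ p.2.1⟩

open Classical in
lemma card_headFactorization_cons {Q : List Bool → Prop} (hQ : ¬ Q []) (d : Bool)
    (w : List Bool) :
    ENat.card (HeadFactorization Q (d :: w)) =
      (if Q [d] then ENat.card (Factorization w) else 0) +
        ENat.card (HeadFactorization (fun u => u ≠ [] ∧ Q (d :: u)) w) := by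
  let f : {L : Factorization w // Q [d]} ⊕ HeadFactorization (fun u => u ≠ [] ∧ Q (d :: u)) w →
      HeadFactorization Q (d :: w) :=
    Sum.elim (fun L => ⟨([d], L.1.1), L.2, L.1.2.1, by simp [L.1.2.2.1], L.1.2.2.2⟩) fun p =>
      ⟨(d :: p.1.1, p.1.2), p.2.1.2, p.2.2.1, by simp [p.2.2.2.1], p.2.2.2.2⟩
  have hf : f.Bijective := by
    constructor
    · rintro (⟨⟨L, hL⟩, hd⟩ | ⟨⟨u, L⟩, hp⟩) (⟨⟨L', hL'⟩, hd'⟩ | ⟨⟨u', L'⟩, hp'⟩) h <;>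
        simp only [f, Sum.elim_inl, Sum.elim_inr, Subtype.mk.injEq, Prod.mk.injEq,
          List.cons.injEq] at h
      · simp [h.2]
      · exact absurd h.1.2.symm hp'.1.1
      · exact absurd h.1.2 hp.1.1
      · simp [h.1.2, h.2]
    · rintro ⟨⟨_ | ⟨d', u⟩, L⟩, hQu, hL, hv, hgood⟩
      · exact absurd hQu hQ
      · obtain ⟨rfl, hw⟩ : d' = d ∧ u ++ L.flatten = w := by simpa using hv
        rcases u with _ | ⟨e, u⟩
        · exact ⟨.inl ⟨⟨L, hL, by simpa using hw, hgood⟩, hQu⟩, rfl⟩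
        · exact ⟨.inr ⟨(e :: u, L), ⟨by simp, hQu⟩, hL, hw, hgood⟩, rfl⟩
  rw [← ENat.card_congr (Equiv.ofBijective f hf), ENat.card_sum]
  split_ifs with hd
  · rw [ENat.card_congr (Equiv.subtypeUnivEquiv fun _ => hd)]
  · rw [(ENat.card_eq_zero_iff_empty _).2 ⟨fun L => hd L.2⟩, zero_add]

lemma card_factorization_nil : ENat.card (Factorization []) = 1 := by
  rw [card_factorization,
    card_headFactorization_eq_zero fun _ hu => List.prefix_nil.1 hu ▸ not_goodFactor_nil, add_zero]

lemma card_factorization_cons (d : Bool) (w : List Bool) :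
    ENat.card (Factorization (d :: w)) =
      1 + ENat.card (Factorization w) + ENat.card (HeadFactorization (GoodFactorOf d) w) := by
  have hQ : (fun u => u ≠ [] ∧ GoodFactor (d :: u)) = GoodFactorOf d := by
    ext
    rw [goodFactor_cons_iff]
    exact ⟨fun h => h.2.resolve_left h.1, fun h => ⟨h.ne_nil, .inr h⟩⟩
  rw [card_factorization, card_headFactorization_cons not_goodFactor_nil,
    if_pos (goodFactor_cons_iff.2 (.inl rfl)), hQ, add_assoc]

lemma card_headFactorization_goodFactorOf_nil (c : Bool) :
    ENat.card (HeadFactorization (GoodFactorOf c) []) = 0 :=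
  card_headFactorization_eq_zero fun _ hu h => h.ne_nil (List.prefix_nil.1 hu)

lemma card_headFactorization_goodFactorOf_cons_self (c : Bool) (w : List Bool) :
    ENat.card (HeadFactorization (GoodFactorOf c) (c :: w)) =
      ENat.card (HeadFactorization (GoodFactorOf c) w) := by
  have hQ : (fun u => u ≠ [] ∧ GoodFactorOf c (c :: u)) = GoodFactorOf c := by
    ext
    simpa [goodFactorOf_cons_iff] using GoodFactorOf.ne_nil
  rw [card_headFactorization_cons (not_goodFactorOf_nil c),
    if_neg (by simp [goodFactorOf_cons_iff, not_goodFactorOf_nil]), hQ, zero_add]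

lemma card_headFactorization_goodFactorOf_cons_not (c : Bool) (w : List Bool) :
    ENat.card (HeadFactorization (GoodFactorOf c) ((!c) :: w)) =
      ENat.card (Factorization w) := by
  rw [card_headFactorization_cons (not_goodFactorOf_nil c),
    if_pos (by simp [goodFactorOf_cons_iff]),
    card_headFactorization_eq_zero (by simp [goodFactorOf_cons_iff]), add_zero]

lemma alternatingCount_eq_card_factorization (v : List Bool) :
    (alternatingCount v : ℕ∞) = ENat.card (Factorization v) ∧
      ∀ c, (alternatingCountAfter c v : ℕ∞) =
        1 + ENat.card (HeadFactorization (GoodFactorOf c) v) := by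
  induction v with
  | nil =>
    simp [alternatingCount_nil, alternatingCountAfter_nil, card_factorization_nil,
      card_headFactorization_goodFactorOf_nil]
  | cons d w ih =>
    refine ⟨?_, fun c => ?_⟩
    · rw [alternatingCount_cons, card_factorization_cons, Nat.cast_add, ih.1, ih.2]
      ring
    · obtain rfl | rfl := Bool.eq_or_eq_not d c
      · rw [alternatingCountAfter_cons_self, card_headFactorization_goodFactorOf_cons_self, ih.2]
      · rw [alternatingCountAfter_cons_not, card_headFactorization_goodFactorOf_cons_not,
          Nat.cast_add, ih.1, Nat.cast_one]

/-- the number of `T` with `v^T` alternating equals the number of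
factorizations `v = u_1 ⋯ u_k` with `u_1,…,u_{k-1}` of the form `x^i y` or `y^i x`. -/
theorem stmt12 (v : List Bool) :
    ((Finset.Icc 1 v.length).powerset.filter
        (fun T => List.IsChain (· ≠ ·) (subword v T))).card =
      Nat.card {L : List (List Bool) //
        L ≠ [] ∧ L.flatten = v ∧ ∀ w ∈ L.dropLast, GoodFactor w} := by
  calc _ = alternatingCount v := rfl
    _ = (ENat.card (Factorization v)).toNat := by
      rw [← (alternatingCount_eq_card_factorization v).1, ENat.toNat_natCast]
    _ = _ := Cardinal.toNat_toENat _
end
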